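/- Let P = MvPolynomial (Fin 4) ℤ with variables x₁, x₂, x₃, γ, let eᵢ denote the i-th elementary symmetric polynomial in x₁, x₂, x₃ only, let I be the ideal of P generated by e₁, e₂, e₃ − 2γ, and γ², and let A = P ⧸ I. Then A is a free ℤ-module of rank 12 (this realizes the integral cohomology ring of the flag manifold G₂/T, whose rank equals the order of the Weyl group of type G₂). -/
import Mathlib


namespace Stmt17

noncomputable section

/-- The polynomial ring `P = ℤ[x₁, x₂, x₃, γ]`. -/
abbrev P := MvPolynomial (Fin 4) ℤ

def x₁ : P := MvPolynomial.X 0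
def x₂ : P := MvPolynomial.X 1
def x₃ : P := MvPolynomial.X 2
def γ : P := MvPolynomial.X 3

/-- The elementary symmetric polynomials in the three variables `x₁, x₂, x₃` only. -/
def e₁ : P := x₁ + x₂ + x₃
def e₂ : P := x₁ * x₂ + x₁ * x₃ + x₂ * x₃
def e₃ : P := x₁ * x₂ * x₃

/-- The ideal `(e₁, e₂, e₃ − 2γ, γ²)`. -/
def I : Ideal P := Ideal.span {e₁, e₂, e₃ - 2 * γ, γ ^ 2}

/-- The quotient ring `A = P ⧸ I`, realizing `H^*(G₂/T; ℤ)`. -/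
abbrev A := P ⧸ I

open Matrix
def b0 : P := 1
def b1 : P := x₁
def b2 : P := x₂
def b3 : P := x₁^2
def b4 : P := x₁*x₂
def b5 : P := x₁^2*x₂
def b6 : P := γ
def b7 : P := γ*x₁
def b8 : P := γ*x₂
def b9 : P := γ*x₁^2
def b10 : P := γ*x₁*x₂
def b11 : P := γ*x₁^2*x₂

def mB : Fin 12 → P := ![b0, b1, b2, b3, b4, b5, b6, b7, b8, b9, b10, b11]

def M0 : Matrix (Fin 12) (Fin 12) ℤ := !![0, 0, 0, 0, 0, 0, 0, 0, 0, 0, 0, 0;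
    1, 0, 0, 0, 0, 0, 0, 0, 0, 0, 0, 0;
    0, 0, 0, 0, 0, 0, 0, 0, 0, 0, 0, 0;
    0, 1, 0, 0, 0, 0, 0, 0, 0, 0, 0, 0;
    0, 0, 1, 0, 0, 0, 0, 0, 0, 0, 0, 0;
    0, 0, 0, 0, 1, 0, 0, 0, 0, 0, 0, 0;
    0, 0, 0, 2, 0, 0, 0, 0, 0, 0, 0, 0;
    0, 0, 0, 0, 0, 0, 1, 0, 0, 0, 0, 0;
    0, 0, 0, 0, 0, 2, 0, 0, 0, 0, 0, 0;
    0, 0, 0, 0, 0, 0, 0, 1, 0, 0, 0, 0;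
    0, 0, 0, 0, 0, 0, 0, 0, 1, 0, 0, 0;
    0, 0, 0, 0, 0, 0, 0, 0, 0, 0, 1, 0]

def M1 : Matrix (Fin 12) (Fin 12) ℤ := !![0, 0, 0, 0, 0, 0, 0, 0, 0, 0, 0, 0;
    0, 0, 0, 0, 0, 0, 0, 0, 0, 0, 0, 0;
    1, 0, 0, 0, 0, 0, 0, 0, 0, 0, 0, 0;
    0, 0, -1, 0, 0, 0, 0, 0, 0, 0, 0, 0;
    0, 1, -1, 0, 0, 0, 0, 0, 0, 0, 0, 0;
    0, 0, 0, 1, -1, 0, 0, 0, 0, 0, 0, 0;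
    0, 0, 0, 0, -2, 0, 0, 0, 0, 0, 0, 0;
    0, 0, 0, 0, 0, -2, 0, 0, 0, 0, 0, 0;
    0, 0, 0, 0, 0, -2, 1, 0, 0, 0, 0, 0;
    0, 0, 0, 0, 0, 0, 0, 0, -1, 0, 0, 0;
    0, 0, 0, 0, 0, 0, 0, 1, -1, 0, 0, 0;
    0, 0, 0, 0, 0, 0, 0, 0, 0, 1, -1, 0]

def M2 : Matrix (Fin 12) (Fin 12) ℤ := !![0, 0, 0, 0, 0, 0, 0, 0, 0, 0, 0, 0;
    -1, 0, 0, 0, 0, 0, 0, 0, 0, 0, 0, 0;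
    -1, 0, 0, 0, 0, 0, 0, 0, 0, 0, 0, 0;
    0, -1, 1, 0, 0, 0, 0, 0, 0, 0, 0, 0;
    0, -1, 0, 0, 0, 0, 0, 0, 0, 0, 0, 0;
    0, 0, 0, -1, 0, 0, 0, 0, 0, 0, 0, 0;
    0, 0, 0, -2, 2, 0, 0, 0, 0, 0, 0, 0;
    0, 0, 0, 0, 0, 2, -1, 0, 0, 0, 0, 0;
    0, 0, 0, 0, 0, 0, -1, 0, 0, 0, 0, 0;
    0, 0, 0, 0, 0, 0, 0, -1, 1, 0, 0, 0;
    0, 0, 0, 0, 0, 0, 0, -1, 0, 0, 0, 0;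
    0, 0, 0, 0, 0, 0, 0, 0, 0, -1, 0, 0]

def M3 : Matrix (Fin 12) (Fin 12) ℤ := !![0, 0, 0, 0, 0, 0, 0, 0, 0, 0, 0, 0;
    0, 0, 0, 0, 0, 0, 0, 0, 0, 0, 0, 0;
    0, 0, 0, 0, 0, 0, 0, 0, 0, 0, 0, 0;
    0, 0, 0, 0, 0, 0, 0, 0, 0, 0, 0, 0;
    0, 0, 0, 0, 0, 0, 0, 0, 0, 0, 0, 0;
    0, 0, 0, 0, 0, 0, 0, 0, 0, 0, 0, 0;
    1, 0, 0, 0, 0, 0, 0, 0, 0, 0, 0, 0;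
    0, 1, 0, 0, 0, 0, 0, 0, 0, 0, 0, 0;
    0, 0, 1, 0, 0, 0, 0, 0, 0, 0, 0, 0;
    0, 0, 0, 1, 0, 0, 0, 0, 0, 0, 0, 0;
    0, 0, 0, 0, 1, 0, 0, 0, 0, 0, 0, 0;
    0, 0, 0, 0, 0, 1, 0, 0, 0, 0, 0, 0]

def sM : Set (Matrix (Fin 12) (Fin 12) ℤ) := {M0, M1, M2, M3}

lemma hcomm : ∀ a ∈ sM, ∀ b ∈ sM, a * b = b * a := by
  intro a ha b hb
  simp only [sM, Set.mem_insert_iff, Set.mem_singleton_iff] at ha hb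
  rcases ha with rfl|rfl|rfl|rfl <;> rcases hb with rfl|rfl|rfl|rfl <;> decide

noncomputable instance : CommRing (Algebra.adjoin ℤ sM) := Algebra.adjoinCommRingOfComm ℤ hcomm

noncomputable def gM : Fin 4 → Algebra.adjoin ℤ sM :=
  ![⟨M0, Algebra.subset_adjoin (by simp [sM])⟩, ⟨M1, Algebra.subset_adjoin (by simp [sM])⟩,
    ⟨M2, Algebra.subset_adjoin (by simp [sM])⟩, ⟨M3, Algebra.subset_adjoin (by simp [sM])⟩]

noncomputable def φ : P →+* Matrix (Fin 12) (Fin 12) ℤ :=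
  ((Algebra.adjoin ℤ sM).val.toRingHom).comp (MvPolynomial.aeval gM).toRingHom

lemma φ_x1 : φ x₁ = M0 := by simp [φ, x₁, gM]
lemma φ_x2 : φ x₂ = M1 := by simp [φ, x₂, gM]
lemma φ_x3 : φ x₃ = M2 := by simp [φ, x₃, gM]
lemma φ_g : φ γ = M3 := by simp [φ, γ, gM]

def v0 : Fin 12 → ℤ := ![1,0,0,0,0,0,0,0,0,0,0,0]
def std (j : Fin 12) : Fin 12 → ℤ := fun i => if i = j then 1 else 0

lemma hI0 : ∀ p ∈ I, φ p *ᵥ v0 = 0 := by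
  intro p hp
  induction hp using Submodule.span_induction with
  | mem x hx =>
    simp only [Set.mem_insert_iff, Set.mem_singleton_iff] at hx
    rcases hx with rfl|rfl|rfl|rfl
    · rw [show φ e₁ = M0 + M1 + M2 by rw [e₁]; simp [_root_.map_add, φ_x1, φ_x2, φ_x3]]
      decide
    · rw [show φ e₂ = M0*M1 + M0*M2 + M1*M2 by
        rw [e₂]; simp [_root_.map_add, _root_.map_mul, φ_x1, φ_x2, φ_x3]]
      decide
    · rw [show φ (e₃ - 2*γ) = M0*M1*M2 - 2*M3 by
        rw [e₃]; simp [_root_.map_sub, _root_.map_mul, _root_.map_ofNat, φ_x1, φ_x2, φ_x3, φ_g]]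
      decide
    · rw [show φ (γ^2) = M3^2 by simp [_root_.map_pow, φ_g]]
      decide
  | zero => simp
  | add x y _ _ hx hy => rw [_root_.map_add, Matrix.add_mulVec, hx, hy]; simp
  | smul r x _ hx =>
    rw [smul_eq_mul, _root_.map_mul, ← Matrix.mulVec_mulVec, hx, Matrix.mulVec_zero]

lemma hstd0 : φ b0 *ᵥ v0 = std 0 := by
  simp only [b0, _root_.map_one]; decide
lemma hstd1 : φ b1 *ᵥ v0 = std 1 := by
  simp only [b1, _root_.map_mul, _root_.map_pow, φ_x1, φ_x2, φ_g]; decide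
lemma hstd2 : φ b2 *ᵥ v0 = std 2 := by
  simp only [b2, _root_.map_mul, _root_.map_pow, φ_x1, φ_x2, φ_g]; decide
lemma hstd3 : φ b3 *ᵥ v0 = std 3 := by
  simp only [b3, _root_.map_mul, _root_.map_pow, φ_x1, φ_x2, φ_g]; decide
lemma hstd4 : φ b4 *ᵥ v0 = std 4 := by
  simp only [b4, _root_.map_mul, _root_.map_pow, φ_x1, φ_x2, φ_g]; decide
lemma hstd5 : φ b5 *ᵥ v0 = std 5 := by
  simp only [b5, _root_.map_mul, _root_.map_pow, φ_x1, φ_x2, φ_g]; decide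
lemma hstd6 : φ b6 *ᵥ v0 = std 6 := by
  simp only [b6, _root_.map_mul, _root_.map_pow, φ_x1, φ_x2, φ_g]; decide
lemma hstd7 : φ b7 *ᵥ v0 = std 7 := by
  simp only [b7, _root_.map_mul, _root_.map_pow, φ_x1, φ_x2, φ_g]; decide
lemma hstd8 : φ b8 *ᵥ v0 = std 8 := by
  simp only [b8, _root_.map_mul, _root_.map_pow, φ_x1, φ_x2, φ_g]; decide
lemma hstd9 : φ b9 *ᵥ v0 = std 9 := by
  simp only [b9, _root_.map_mul, _root_.map_pow, φ_x1, φ_x2, φ_g]; decide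
lemma hstd10 : φ b10 *ᵥ v0 = std 10 := by
  simp only [b10, _root_.map_mul, _root_.map_pow, φ_x1, φ_x2, φ_g]; decide
lemma hstd11 : φ b11 *ᵥ v0 = std 11 := by
  simp only [b11, _root_.map_mul, _root_.map_pow, φ_x1, φ_x2, φ_g]; decide

lemma hstd : ∀ j : Fin 12, φ (mB j) *ᵥ v0 = std j := by
  intro j
  fin_cases j
  · exact hstd0
  · exact hstd1
  · exact hstd2
  · exact hstd3
  · exact hstd4
  · exact hstd5
  · exact hstd6
  · exact hstd7
  · exact hstd8
  · exact hstd9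
  · exact hstd10
  · exact hstd11

lemma φ_I : ∀ p ∈ I, φ p = 0 := by
  intro p hp
  ext i j
  have h1 : φ p *ᵥ std j = 0 := by
    rw [← hstd j, Matrix.mulVec_mulVec, ← _root_.map_mul,
      hI0 _ (Ideal.mul_mem_right _ _ hp)]
  have h2 : (φ p *ᵥ std j) i = φ p i j := by
    simp [Matrix.mulVec, dotProduct, std]
  rw [h1] at h2
  simpa using h2.symm

noncomputable def Lq : A →+* Matrix (Fin 12) (Fin 12) ℤ := Ideal.Quotient.lift I φ φ_I

noncomputable def Φ : A →ₗ[ℤ] (Fin 12 → ℤ) :=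
  AddMonoidHom.toIntLinearMap
    { toFun := fun a => Lq a *ᵥ v0
      map_zero' := by simp
      map_add' := fun a b => by simp [_root_.map_add, Matrix.add_mulVec] }

lemma Φ_mk (p : P) : Φ (Ideal.Quotient.mk I p) = φ p *ᵥ v0 := by
  simp [Φ, Lq, Ideal.Quotient.lift_mk]

noncomputable def mkq : P →+* A := Ideal.Quotient.mk I

def S : Submodule ℤ A :=
  Submodule.span ℤ {mkq b0, mkq b1, mkq b2, mkq b3, mkq b4, mkq b5,
    mkq b6, mkq b7, mkq b8, mkq b9, mkq b10, mkq b11}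

lemma step (p a1 a2 a3 a4 : P)
    (c0 c1 c2 c3 c4 c5 c6 c7 c8 c9 c10 c11 : ℤ)
    (h : p = a1*e₁ + a2*e₂ + a3*(e₃ - 2*γ) + a4*γ^2
        + (c0:P)*b0 + (c1:P)*b1 + (c2:P)*b2 + (c3:P)*b3 + (c4:P)*b4 + (c5:P)*b5
        + (c6:P)*b6 + (c7:P)*b7 + (c8:P)*b8 + (c9:P)*b9 + (c10:P)*b10 + (c11:P)*b11) :
    mkq p ∈ S := by
  have hd : p - ((c0:P)*b0 + (c1:P)*b1 + (c2:P)*b2 + (c3:P)*b3 + (c4:P)*b4 + (c5:P)*b5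
      + (c6:P)*b6 + (c7:P)*b7 + (c8:P)*b8 + (c9:P)*b9 + (c10:P)*b10 + (c11:P)*b11) ∈ I := by
    rw [show p - ((c0:P)*b0 + (c1:P)*b1 + (c2:P)*b2 + (c3:P)*b3 + (c4:P)*b4 + (c5:P)*b5
      + (c6:P)*b6 + (c7:P)*b7 + (c8:P)*b8 + (c9:P)*b9 + (c10:P)*b10 + (c11:P)*b11)
      = a1*e₁ + a2*e₂ + a3*(e₃ - 2*γ) + a4*γ^2 by rw [h]; ring]
    refine add_mem (add_mem (add_mem ?_ ?_) ?_) ?_ <;>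
      exact Ideal.mul_mem_left _ _ (Ideal.subset_span (by simp))
  have he : mkq p = mkq ((c0:P)*b0 + (c1:P)*b1 + (c2:P)*b2 + (c3:P)*b3 + (c4:P)*b4 + (c5:P)*b5
      + (c6:P)*b6 + (c7:P)*b7 + (c8:P)*b8 + (c9:P)*b9 + (c10:P)*b10 + (c11:P)*b11) :=
    (Ideal.Quotient.mk_eq_mk_iff_sub_mem _ _).mpr hd
  rw [he]
  simp only [_root_.map_add, _root_.map_mul, map_intCast]
  refine add_mem (add_mem (add_mem (add_mem (add_mem (add_mem (add_mem (add_mem (add_mem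
    (add_mem (add_mem ?_ ?_) ?_) ?_) ?_) ?_) ?_) ?_) ?_) ?_) ?_) ?_ <;>
  · rw [← zsmul_eq_mul]
    exact Submodule.smul_mem _ _ (Submodule.subset_span (by simp [S]))

lemma mul_var_mem (v : Fin 4) {a : A} (ha : a ∈ S) : mkq (MvPolynomial.X v) * a ∈ S := by
  induction ha using Submodule.span_induction with
  | zero => simp
  | add x y _ _ hx hy => rw [mul_add]; exact add_mem hx hy
  | smul c x _ hx => rw [mul_smul_comm]; exact Submodule.smul_mem _ _ hx
  | mem x hx =>
    simp only [Set.mem_insert_iff, Set.mem_singleton_iff] at hx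
    rcases hx with rfl|rfl|rfl|rfl|rfl|rfl|rfl|rfl|rfl|rfl|rfl|rfl <;>
      rw [← _root_.map_mul] <;> fin_cases v
    · exact step (x₁ * b0) 0 0 0 0 0 1 0 0 0 0 0 0 0 0 0 0
        (by simp only [b0, b1, b2, b3, b4, b5, b6, b7, b8, b9, b10, b11, e₁, e₂, e₃, x₁, x₂, x₃, γ]; push_cast; ring)
    · exact step (x₂ * b0) 0 0 0 0 0 0 1 0 0 0 0 0 0 0 0 0
        (by simp only [b0, b1, b2, b3, b4, b5, b6, b7, b8, b9, b10, b11, e₁, e₂, e₃, x₁, x₂, x₃, γ]; push_cast; ring)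
    · exact step (x₃ * b0) (1) 0 0 0 0 (-1) (-1) 0 0 0 0 0 0 0 0 0
        (by simp only [b0, b1, b2, b3, b4, b5, b6, b7, b8, b9, b10, b11, e₁, e₂, e₃, x₁, x₂, x₃, γ]; push_cast; ring)
    · exact step (γ * b0) 0 0 0 0 0 0 0 0 0 0 1 0 0 0 0 0
        (by simp only [b0, b1, b2, b3, b4, b5, b6, b7, b8, b9, b10, b11, e₁, e₂, e₃, x₁, x₂, x₃, γ]; push_cast; ring)
    · exact step (x₁ * b1) 0 0 0 0 0 0 0 1 0 0 0 0 0 0 0 0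
        (by simp only [b0, b1, b2, b3, b4, b5, b6, b7, b8, b9, b10, b11, e₁, e₂, e₃, x₁, x₂, x₃, γ]; push_cast; ring)
    · exact step (x₂ * b1) 0 0 0 0 0 0 0 0 1 0 0 0 0 0 0 0
        (by simp only [b0, b1, b2, b3, b4, b5, b6, b7, b8, b9, b10, b11, e₁, e₂, e₃, x₁, x₂, x₃, γ]; push_cast; ring)
    · exact step (x₃ * b1) (x₁) 0 0 0 0 0 0 (-1) (-1) 0 0 0 0 0 0 0
        (by simp only [b0, b1, b2, b3, b4, b5, b6, b7, b8, b9, b10, b11, e₁, e₂, e₃, x₁, x₂, x₃, γ]; push_cast; ring)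
    · exact step (γ * b1) 0 0 0 0 0 0 0 0 0 0 0 1 0 0 0 0
        (by simp only [b0, b1, b2, b3, b4, b5, b6, b7, b8, b9, b10, b11, e₁, e₂, e₃, x₁, x₂, x₃, γ]; push_cast; ring)
    · exact step (x₁ * b2) 0 0 0 0 0 0 0 0 1 0 0 0 0 0 0 0
        (by simp only [b0, b1, b2, b3, b4, b5, b6, b7, b8, b9, b10, b11, e₁, e₂, e₃, x₁, x₂, x₃, γ]; push_cast; ring)
    · exact step (x₂ * b2) (x₂ + x₁) ((-1)) 0 0 0 0 0 (-1) (-1) 0 0 0 0 0 0 0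
        (by simp only [b0, b1, b2, b3, b4, b5, b6, b7, b8, b9, b10, b11, e₁, e₂, e₃, x₁, x₂, x₃, γ]; push_cast; ring)
    · exact step (x₃ * b2) ((-1)*x₁) (1) 0 0 0 0 0 1 0 0 0 0 0 0 0 0
        (by simp only [b0, b1, b2, b3, b4, b5, b6, b7, b8, b9, b10, b11, e₁, e₂, e₃, x₁, x₂, x₃, γ]; push_cast; ring)
    · exact step (γ * b2) 0 0 0 0 0 0 0 0 0 0 0 0 1 0 0 0
        (by simp only [b0, b1, b2, b3, b4, b5, b6, b7, b8, b9, b10, b11, e₁, e₂, e₃, x₁, x₂, x₃, γ]; push_cast; ring)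
    · exact step (x₁ * b3) (x₁^2) ((-1)*x₁) (1) 0 0 0 0 0 0 0 2 0 0 0 0 0
        (by simp only [b0, b1, b2, b3, b4, b5, b6, b7, b8, b9, b10, b11, e₁, e₂, e₃, x₁, x₂, x₃, γ]; push_cast; ring)
    · exact step (x₂ * b3) 0 0 0 0 0 0 0 0 0 1 0 0 0 0 0 0
        (by simp only [b0, b1, b2, b3, b4, b5, b6, b7, b8, b9, b10, b11, e₁, e₂, e₃, x₁, x₂, x₃, γ]; push_cast; ring)
    · exact step (x₃ * b3) 0 (x₁) ((-1)) 0 0 0 0 0 0 (-1) (-2) 0 0 0 0 0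
        (by simp only [b0, b1, b2, b3, b4, b5, b6, b7, b8, b9, b10, b11, e₁, e₂, e₃, x₁, x₂, x₃, γ]; push_cast; ring)
    · exact step (γ * b3) 0 0 0 0 0 0 0 0 0 0 0 0 0 1 0 0
        (by simp only [b0, b1, b2, b3, b4, b5, b6, b7, b8, b9, b10, b11, e₁, e₂, e₃, x₁, x₂, x₃, γ]; push_cast; ring)
    · exact step (x₁ * b4) 0 0 0 0 0 0 0 0 0 1 0 0 0 0 0 0
        (by simp only [b0, b1, b2, b3, b4, b5, b6, b7, b8, b9, b10, b11, e₁, e₂, e₃, x₁, x₂, x₃, γ]; push_cast; ring)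
    · exact step (x₂ * b4) (x₁*x₂) 0 ((-1)) 0 0 0 0 0 0 (-1) (-2) 0 0 0 0 0
        (by simp only [b0, b1, b2, b3, b4, b5, b6, b7, b8, b9, b10, b11, e₁, e₂, e₃, x₁, x₂, x₃, γ]; push_cast; ring)
    · exact step (x₃ * b4) 0 0 (1) 0 0 0 0 0 0 0 2 0 0 0 0 0
        (by simp only [b0, b1, b2, b3, b4, b5, b6, b7, b8, b9, b10, b11, e₁, e₂, e₃, x₁, x₂, x₃, γ]; push_cast; ring)
    · exact step (γ * b4) 0 0 0 0 0 0 0 0 0 0 0 0 0 0 1 0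
        (by simp only [b0, b1, b2, b3, b4, b5, b6, b7, b8, b9, b10, b11, e₁, e₂, e₃, x₁, x₂, x₃, γ]; push_cast; ring)
    · exact step (x₁ * b5) (x₁^2*x₂) ((-1)*x₁*x₂) (x₂) 0 0 0 0 0 0 0 0 0 2 0 0 0
        (by simp only [b0, b1, b2, b3, b4, b5, b6, b7, b8, b9, b10, b11, e₁, e₂, e₃, x₁, x₂, x₃, γ]; push_cast; ring)
    · exact step (x₂ * b5) 0 (x₁*x₂) ((-1)*x₂ + (-1)*x₁) 0 0 0 0 0 0 0 0 (-2) (-2) 0 0 0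
        (by simp only [b0, b1, b2, b3, b4, b5, b6, b7, b8, b9, b10, b11, e₁, e₂, e₃, x₁, x₂, x₃, γ]; push_cast; ring)
    · exact step (x₃ * b5) 0 0 (x₁) 0 0 0 0 0 0 0 0 2 0 0 0 0
        (by simp only [b0, b1, b2, b3, b4, b5, b6, b7, b8, b9, b10, b11, e₁, e₂, e₃, x₁, x₂, x₃, γ]; push_cast; ring)
    · exact step (γ * b5) 0 0 0 0 0 0 0 0 0 0 0 0 0 0 0 1
        (by simp only [b0, b1, b2, b3, b4, b5, b6, b7, b8, b9, b10, b11, e₁, e₂, e₃, x₁, x₂, x₃, γ]; push_cast; ring)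
    · exact step (x₁ * b6) 0 0 0 0 0 0 0 0 0 0 0 1 0 0 0 0
        (by simp only [b0, b1, b2, b3, b4, b5, b6, b7, b8, b9, b10, b11, e₁, e₂, e₃, x₁, x₂, x₃, γ]; push_cast; ring)
    · exact step (x₂ * b6) 0 0 0 0 0 0 0 0 0 0 0 0 1 0 0 0
        (by simp only [b0, b1, b2, b3, b4, b5, b6, b7, b8, b9, b10, b11, e₁, e₂, e₃, x₁, x₂, x₃, γ]; push_cast; ring)
    · exact step (x₃ * b6) (γ) 0 0 0 0 0 0 0 0 0 0 (-1) (-1) 0 0 0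
        (by simp only [b0, b1, b2, b3, b4, b5, b6, b7, b8, b9, b10, b11, e₁, e₂, e₃, x₁, x₂, x₃, γ]; push_cast; ring)
    · exact step (γ * b6) 0 0 0 (1) 0 0 0 0 0 0 0 0 0 0 0 0
        (by simp only [b0, b1, b2, b3, b4, b5, b6, b7, b8, b9, b10, b11, e₁, e₂, e₃, x₁, x₂, x₃, γ]; push_cast; ring)
    · exact step (x₁ * b7) 0 0 0 0 0 0 0 0 0 0 0 0 0 1 0 0
        (by simp only [b0, b1, b2, b3, b4, b5, b6, b7, b8, b9, b10, b11, e₁, e₂, e₃, x₁, x₂, x₃, γ]; push_cast; ring)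
    · exact step (x₂ * b7) 0 0 0 0 0 0 0 0 0 0 0 0 0 0 1 0
        (by simp only [b0, b1, b2, b3, b4, b5, b6, b7, b8, b9, b10, b11, e₁, e₂, e₃, x₁, x₂, x₃, γ]; push_cast; ring)
    · exact step (x₃ * b7) (x₁*γ) 0 0 0 0 0 0 0 0 0 0 0 0 (-1) (-1) 0
        (by simp only [b0, b1, b2, b3, b4, b5, b6, b7, b8, b9, b10, b11, e₁, e₂, e₃, x₁, x₂, x₃, γ]; push_cast; ring)
    · exact step (γ * b7) 0 0 0 (x₁) 0 0 0 0 0 0 0 0 0 0 0 0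
        (by simp only [b0, b1, b2, b3, b4, b5, b6, b7, b8, b9, b10, b11, e₁, e₂, e₃, x₁, x₂, x₃, γ]; push_cast; ring)
    · exact step (x₁ * b8) 0 0 0 0 0 0 0 0 0 0 0 0 0 0 1 0
        (by simp only [b0, b1, b2, b3, b4, b5, b6, b7, b8, b9, b10, b11, e₁, e₂, e₃, x₁, x₂, x₃, γ]; push_cast; ring)
    · exact step (x₂ * b8) (x₂*γ + x₁*γ) ((-1)*γ) 0 0 0 0 0 0 0 0 0 0 0 (-1) (-1) 0
        (by simp only [b0, b1, b2, b3, b4, b5, b6, b7, b8, b9, b10, b11, e₁, e₂, e₃, x₁, x₂, x₃, γ]; push_cast; ring)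
    · exact step (x₃ * b8) ((-1)*x₁*γ) (γ) 0 0 0 0 0 0 0 0 0 0 0 1 0 0
        (by simp only [b0, b1, b2, b3, b4, b5, b6, b7, b8, b9, b10, b11, e₁, e₂, e₃, x₁, x₂, x₃, γ]; push_cast; ring)
    · exact step (γ * b8) 0 0 0 (x₂) 0 0 0 0 0 0 0 0 0 0 0 0
        (by simp only [b0, b1, b2, b3, b4, b5, b6, b7, b8, b9, b10, b11, e₁, e₂, e₃, x₁, x₂, x₃, γ]; push_cast; ring)
    · exact step (x₁ * b9) (x₁^2*γ) ((-1)*x₁*γ) (γ) (2) 0 0 0 0 0 0 0 0 0 0 0 0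
        (by simp only [b0, b1, b2, b3, b4, b5, b6, b7, b8, b9, b10, b11, e₁, e₂, e₃, x₁, x₂, x₃, γ]; push_cast; ring)
    · exact step (x₂ * b9) 0 0 0 0 0 0 0 0 0 0 0 0 0 0 0 1
        (by simp only [b0, b1, b2, b3, b4, b5, b6, b7, b8, b9, b10, b11, e₁, e₂, e₃, x₁, x₂, x₃, γ]; push_cast; ring)
    · exact step (x₃ * b9) 0 (x₁*γ) ((-1)*γ) ((-2)) 0 0 0 0 0 0 0 0 0 0 0 (-1)
        (by simp only [b0, b1, b2, b3, b4, b5, b6, b7, b8, b9, b10, b11, e₁, e₂, e₃, x₁, x₂, x₃, γ]; push_cast; ring)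
    · exact step (γ * b9) 0 0 0 (x₁^2) 0 0 0 0 0 0 0 0 0 0 0 0
        (by simp only [b0, b1, b2, b3, b4, b5, b6, b7, b8, b9, b10, b11, e₁, e₂, e₃, x₁, x₂, x₃, γ]; push_cast; ring)
    · exact step (x₁ * b10) 0 0 0 0 0 0 0 0 0 0 0 0 0 0 0 1
        (by simp only [b0, b1, b2, b3, b4, b5, b6, b7, b8, b9, b10, b11, e₁, e₂, e₃, x₁, x₂, x₃, γ]; push_cast; ring)
    · exact step (x₂ * b10) (x₁*x₂*γ) 0 ((-1)*γ) ((-2)) 0 0 0 0 0 0 0 0 0 0 0 (-1)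
        (by simp only [b0, b1, b2, b3, b4, b5, b6, b7, b8, b9, b10, b11, e₁, e₂, e₃, x₁, x₂, x₃, γ]; push_cast; ring)
    · exact step (x₃ * b10) 0 0 (γ) (2) 0 0 0 0 0 0 0 0 0 0 0 0
        (by simp only [b0, b1, b2, b3, b4, b5, b6, b7, b8, b9, b10, b11, e₁, e₂, e₃, x₁, x₂, x₃, γ]; push_cast; ring)
    · exact step (γ * b10) 0 0 0 (x₁*x₂) 0 0 0 0 0 0 0 0 0 0 0 0
        (by simp only [b0, b1, b2, b3, b4, b5, b6, b7, b8, b9, b10, b11, e₁, e₂, e₃, x₁, x₂, x₃, γ]; push_cast; ring)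
    · exact step (x₁ * b11) (x₁^2*x₂*γ) ((-1)*x₁*x₂*γ) (x₂*γ) (2*x₂) 0 0 0 0 0 0 0 0 0 0 0 0
        (by simp only [b0, b1, b2, b3, b4, b5, b6, b7, b8, b9, b10, b11, e₁, e₂, e₃, x₁, x₂, x₃, γ]; push_cast; ring)
    · exact step (x₂ * b11) 0 (x₁*x₂*γ) ((-1)*x₂*γ + (-1)*x₁*γ) ((-2)*x₂ + (-2)*x₁) 0 0 0 0 0 0 0 0 0 0 0 0
        (by simp only [b0, b1, b2, b3, b4, b5, b6, b7, b8, b9, b10, b11, e₁, e₂, e₃, x₁, x₂, x₃, γ]; push_cast; ring)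
    · exact step (x₃ * b11) 0 0 (x₁*γ) (2*x₁) 0 0 0 0 0 0 0 0 0 0 0 0
        (by simp only [b0, b1, b2, b3, b4, b5, b6, b7, b8, b9, b10, b11, e₁, e₂, e₃, x₁, x₂, x₃, γ]; push_cast; ring)
    · exact step (γ * b11) 0 0 0 (x₁^2*x₂) 0 0 0 0 0 0 0 0 0 0 0 0
        (by simp only [b0, b1, b2, b3, b4, b5, b6, b7, b8, b9, b10, b11, e₁, e₂, e₃, x₁, x₂, x₃, γ]; push_cast; ring)

lemma mk_mem_S : ∀ p : P, mkq p ∈ S := by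
  intro p
  induction p using MvPolynomial.induction_on with
  | C a =>
    refine step (MvPolynomial.C a) 0 0 0 0 a 0 0 0 0 0 0 0 0 0 0 0 ?_
    rw [eq_intCast (MvPolynomial.C : ℤ →+* P) a]
    simp only [b0]
    ring
  | add p q hp hq => rw [_root_.map_add]; exact add_mem hp hq
  | mul_X p v hp => rw [mul_comm, _root_.map_mul]; exact mul_var_mem v hp

noncomputable def ψ : (Fin 12 → ℤ) →ₗ[ℤ] A where
  toFun v := v 0 • mkq b0 + v 1 • mkq b1 + v 2 • mkq b2 + v 3 • mkq b3 + v 4 • mkq b4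
    + v 5 • mkq b5 + v 6 • mkq b6 + v 7 • mkq b7 + v 8 • mkq b8 + v 9 • mkq b9
    + v 10 • mkq b10 + v 11 • mkq b11
  map_add' v w := by simp only [Pi.add_apply, add_smul]; abel
  map_smul' c v := by simp only [Pi.smul_apply, smul_eq_mul, mul_smul, RingHom.id_apply,
    smul_add]

lemma Φψ (v : Fin 12 → ℤ) : Φ (ψ v) = v := by
  have h0 : Φ (mkq b0) = std 0 := by rw [show mkq b0 = Ideal.Quotient.mk I b0 from rfl, Φ_mk]; exact hstd0
  have h1 : Φ (mkq b1) = std 1 := by rw [show mkq b1 = Ideal.Quotient.mk I b1 from rfl, Φ_mk]; exact hstd1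
  have h2 : Φ (mkq b2) = std 2 := by rw [show mkq b2 = Ideal.Quotient.mk I b2 from rfl, Φ_mk]; exact hstd2
  have h3 : Φ (mkq b3) = std 3 := by rw [show mkq b3 = Ideal.Quotient.mk I b3 from rfl, Φ_mk]; exact hstd3
  have h4 : Φ (mkq b4) = std 4 := by rw [show mkq b4 = Ideal.Quotient.mk I b4 from rfl, Φ_mk]; exact hstd4
  have h5 : Φ (mkq b5) = std 5 := by rw [show mkq b5 = Ideal.Quotient.mk I b5 from rfl, Φ_mk]; exact hstd5
  have h6 : Φ (mkq b6) = std 6 := by rw [show mkq b6 = Ideal.Quotient.mk I b6 from rfl, Φ_mk]; exact hstd6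
  have h7 : Φ (mkq b7) = std 7 := by rw [show mkq b7 = Ideal.Quotient.mk I b7 from rfl, Φ_mk]; exact hstd7
  have h8 : Φ (mkq b8) = std 8 := by rw [show mkq b8 = Ideal.Quotient.mk I b8 from rfl, Φ_mk]; exact hstd8
  have h9 : Φ (mkq b9) = std 9 := by rw [show mkq b9 = Ideal.Quotient.mk I b9 from rfl, Φ_mk]; exact hstd9
  have h10 : Φ (mkq b10) = std 10 := by rw [show mkq b10 = Ideal.Quotient.mk I b10 from rfl, Φ_mk]; exact hstd10
  have h11 : Φ (mkq b11) = std 11 := by rw [show mkq b11 = Ideal.Quotient.mk I b11 from rfl, Φ_mk]; exact hstd11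
  simp only [ψ, LinearMap.coe_mk, AddHom.coe_mk, map_add, _root_.map_smul,
    h0, h1, h2, h3, h4, h5, h6, h7, h8, h9, h10, h11]
  funext j
  fin_cases j <;> simp [std]

lemma ψ_surj : Function.Surjective ψ := by
  rw [← LinearMap.range_eq_top]
  rw [eq_top_iff]
  intro a _
  obtain ⟨p, rfl⟩ := Ideal.Quotient.mk_surjective a
  have hS : (Ideal.Quotient.mk I p : A) ∈ S := mk_mem_S p
  have hle : S ≤ LinearMap.range ψ := by
    rw [S, Submodule.span_le]
    intro x hx
    simp only [Set.mem_insert_iff, Set.mem_singleton_iff] at hx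
    rcases hx with rfl|rfl|rfl|rfl|rfl|rfl|rfl|rfl|rfl|rfl|rfl|rfl
    · exact ⟨std 0, by simp [ψ, std]⟩
    · exact ⟨std 1, by simp [ψ, std]⟩
    · exact ⟨std 2, by simp [ψ, std]⟩
    · exact ⟨std 3, by simp [ψ, std]⟩
    · exact ⟨std 4, by simp [ψ, std]⟩
    · exact ⟨std 5, by simp [ψ, std]⟩
    · exact ⟨std 6, by simp [ψ, std]⟩
    · exact ⟨std 7, by simp [ψ, std]⟩
    · exact ⟨std 8, by simp [ψ, std]⟩
    · exact ⟨std 9, by simp [ψ, std]⟩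
    · exact ⟨std 10, by simp [ψ, std]⟩
    · exact ⟨std 11, by simp [ψ, std]⟩
  exact hle hS

lemma ψ_inj : Function.Injective ψ :=
  Function.LeftInverse.injective (g := Φ) Φψ

noncomputable def eqv : (Fin 12 → ℤ) ≃ₗ[ℤ] A :=
  LinearEquiv.ofBijective ψ ⟨ψ_inj, ψ_surj⟩

/-- `A` is a free `ℤ`-module of rank `12`, the order of the Weyl group of
type `G₂`. -/
theorem free_of_rank_twelve :
    Module.Free ℤ A ∧ Module.finrank ℤ A = 12 := by
  constructor
  · exact Module.Free.of_equiv eqv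
  · rw [← LinearEquiv.finrank_eq eqv, Module.finrank_pi]
    simp

end

end Stmt17
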